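/- For every n ∈ ℕ, there is no condensation point x of X with |x − a′ n| < δ (n+1), and there is no condensation point x of X with |x − b′ n| < δ (n+1). -/
import Mathlib


def IsCondensationPoint (X : Set ℝ) (x : ℝ) : Prop :=
  ∀ U : Set ℝ, IsOpen U → x ∈ U → Cardinal.aleph 1 ≤ Cardinal.mk ↥(X ∩ U)

theorem stmt11
    (a b : ℕ → ℝ)
    (hlt : ∀ n, a n < b n)
    (haq : ∀ n, ∃ q : ℚ, (q : ℝ) = a n)
    (hbq : ∀ n, ∃ q : ℚ, (q : ℝ) = b n)
    (hdisj : ∀ i j, i ≠ j → Disjoint (Set.Icc (a i) (b i)) (Set.Icc (a j) (b j)))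
    (hhalf : ∀ n, 2 * (b (n + 1) - a (n + 1)) < b n - a n)
    (hgap : ∀ i j, b i < a j → a j - b i > b 0 - a 0)
    (h01 : a 0 < a 1)
    (hcof : ∀ x : ℝ, ∃ k l, b k < x ∧ x < a l)
    (m : ℕ → ℕ)
    (hm : ∀ n, b n < a (m n))
    (hmgap : ∀ n, Disjoint (Set.Ioo (b n) (a (m n))) (⋃ k, Set.Icc (a k) (b k)))
    (A : ℕ → Set ℝ)
    (hA : ∀ n, A n ⊆ Set.Ioo (b n) (a (m n)))
    (hAcard : ∀ n, ∀ U : Set ℝ, IsOpen U → U.Nonempty → U ⊆ Set.Ioo (b n) (a (m n)) →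
      Cardinal.mk ↥(A n ∩ U) = Cardinal.aleph 1)
    (X : Set ℝ)
    (hX : X = ⋃ n, (({x : ℝ | ∃ q : ℚ, (q : ℝ) = x} ∩ Set.Icc (a n) (b n)) ∪ A n)) :
    ∀ n : ℕ,
      (¬ ∃ x : ℝ, IsCondensationPoint X x ∧
        |x - (a n + (b (n + 1) - a (n + 1)))| < b (n + 1) - a (n + 1)) ∧
      (¬ ∃ x : ℝ, IsCondensationPoint X x ∧
        |x - (b n - (b (n + 1) - a (n + 1)))| < b (n + 1) - a (n + 1)) := by

  intro n
  have hδ : 0 < b (n+1) - a (n+1) := sub_pos.2 (hlt (n+1))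
  -- main claim: no condensation point inside Ioo (a n) (b n)
  have key : ∀ x : ℝ, a n < x → x < b n → ¬ IsCondensationPoint X x := by
    intro x hx1 hx2 hc
    have hle := hc (Set.Ioo (a n) (b n)) isOpen_Ioo ⟨hx1, hx2⟩
    have hsub : X ∩ Set.Ioo (a n) (b n) ⊆ {x : ℝ | ∃ q : ℚ, (q : ℝ) = x} := by
      rintro y ⟨hyX, hyI⟩
      rw [hX] at hyX
      obtain ⟨k, hk⟩ := Set.mem_iUnion.1 hyX
      rcases hk with ⟨hq, _⟩ | hA'
      · exact hq
      · exfalso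
        have := hmgap k
        have hy1 : y ∈ Set.Ioo (b k) (a (m k)) := hA k hA'
        have hy2 : y ∈ ⋃ j, Set.Icc (a j) (b j) :=
          Set.mem_iUnion.2 ⟨n, Set.mem_Icc.2 ⟨hyI.1.le, hyI.2.le⟩⟩
        exact (this.le_bot ⟨hy1, hy2⟩)
    have hcount : (X ∩ Set.Ioo (a n) (b n)).Countable := by
      have : ({x : ℝ | ∃ q : ℚ, (q : ℝ) = x}).Countable := by
        have : {x : ℝ | ∃ q : ℚ, (q : ℝ) = x} = Set.range (fun q : ℚ => (q : ℝ)) := by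
          ext y; simp [Set.range, eq_comm]
        rw [this]; exact Set.countable_range _
      exact this.mono hsub
    have hlt' : Cardinal.mk ↥(X ∩ Set.Ioo (a n) (b n)) < Cardinal.aleph 1 := by
      have h0 : Cardinal.mk ↥(X ∩ Set.Ioo (a n) (b n)) ≤ Cardinal.aleph0 :=
        Cardinal.mk_le_aleph0_iff.mpr hcount.to_subtype
      exact lt_of_le_of_lt h0 Cardinal.aleph0_lt_aleph_one
    exact absurd hle (not_le.2 hlt')
  have h2δ : 2 * (b (n+1) - a (n+1)) < b n - a n := hhalf n
  constructor
  · rintro ⟨x, hc, habs⟩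
    rw [abs_lt] at habs
    have h1 : a n < x := by linarith [habs.1]
    have h2 : x < b n := by linarith [habs.2]
    exact key x h1 h2 hc
  · rintro ⟨x, hc, habs⟩
    rw [abs_lt] at habs
    have h1 : a n < x := by linarith [habs.1]
    have h2 : x < b n := by linarith [habs.2]
    exact key x h1 h2 hc
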